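/- Let A ⊆ Ω be measurable, let u_A be a minimizer of u ↦ J(u,A) over L²(Ω), and let p_A := S*(S(χ_A·u_A) − y_d). Then −χ_A(x)·p_A(x) ∈ ∂g(u_A(x)) for almost all x ∈ Ω, where ∂g denotes the convex subdifferential of g; equivalently, u_A(x) is a minimizer over u ∈ ℝ of the function u ↦ χ_A(x)·p_A(x)·u + g(u) for almost all x ∈ Ω. -/

import Mathlib

open MeasureTheory ENNReal Set Filter Metric Topology
open scoped Classical symmDiff NNReal

noncomputable section

namespace L0Control

variable {α : Type*} [MeasurableSpace α]

/-- The characteristic function `χ_A` of a set `A`, as a real-valued function. -/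
def chi (A : Set α) (x : α) : ℝ := A.indicator (fun _ => (1 : ℝ)) x

/-- Pointwise multiplication of `u ∈ L²(μ)` by the characteristic function of `A`,
as an element of `L²(μ)` (junk value `0` if `A` is not measurable). -/
def chiMul {μ : Measure α} (A : Set α) (u : Lp ℝ 2 μ) : Lp ℝ 2 μ :=
  if hA : MeasurableSet A then
    MemLp.toLp (A.indicator (u : α → ℝ)) ((Lp.memLp u).indicator hA)
  else 0

variable {Y : Type*} [NormedAddCommGroup Y] [InnerProductSpace ℝ Y]

/-- The objective functional
`J(u, A) = ½‖S(χ_A u) − y_d‖² + ∫_Ω (g(u(x)) + χ_A(x) β(x)) dx`,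
with values in `EReal` (the `g`-part may be `+∞`). -/
def Jfun {μ : Measure α} (S : Lp ℝ 2 μ →L[ℝ] Y) (yd : Y) (g : ℝ → ℝ≥0∞) (β : α → ℝ)
    (u : Lp ℝ 2 μ) (A : Set α) : EReal :=
  ((2⁻¹ * ‖S (chiMul A u) - yd‖ ^ 2 + ∫ x in A, β x ∂μ : ℝ) : EReal)
    + ((∫⁻ x, g (u x) ∂μ : ℝ≥0∞) : EReal)

/-- `u` minimizes `J(·, A)` over `L²(μ)`. -/
def IsMinimizer {μ : Measure α} (S : Lp ℝ 2 μ →L[ℝ] Y) (yd : Y) (g : ℝ → ℝ≥0∞) (β : α → ℝ)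
    (A : Set α) (u : Lp ℝ 2 μ) : Prop :=
  ∀ v : Lp ℝ 2 μ, Jfun S yd g β u A ≤ Jfun S yd g β v A

/-- `(u, y, p)` is a solution triple of the problem `(P_A)`:
`u` minimizes `J(·, A)`, `y = S(χ_A u)` is the state and `p = S*(y − y_d)` the adjoint state. -/
def IsSolution {μ : Measure α} [CompleteSpace Y] (S : Lp ℝ 2 μ →L[ℝ] Y) (yd : Y)
    (g : ℝ → ℝ≥0∞) (β : α → ℝ) (A : Set α) (u : Lp ℝ 2 μ) (y : Y) (p : Lp ℝ 2 μ) : Prop :=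
  IsMinimizer S yd g β A u ∧ y = S (chiMul A u) ∧
    p = ContinuousLinearMap.adjoint S (y - yd)

/-- The value function `J(A) = inf_{u ∈ L²} J(u, A)`. -/
def Jval {μ : Measure α} (S : Lp ℝ 2 μ →L[ℝ] Y) (yd : Y) (g : ℝ → ℝ≥0∞) (β : α → ℝ)
    (A : Set α) : EReal :=
  ⨅ u : Lp ℝ 2 μ, Jfun S yd g β u A

/-- `H̄(p) = min_{u ∈ ℝ} (p·u + g(u)) = −g*(−p)`, with values in `EReal`. -/
def Hbar (g : ℝ → ℝ≥0∞) (p : ℝ) : EReal :=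
  ⨅ u : ℝ, ((p * u : ℝ) : EReal) + (g u : EReal)

/-- `H̄(p)` as a real number (it is finite under the standing assumptions). -/
def HbarR (g : ℝ → ℝ≥0∞) (p : ℝ) : ℝ := (Hbar g p).toReal

/-- Absolute value on `EReal`. -/
def eabs (x : EReal) : EReal := max x (-x)

end L0Control

open L0Control

/-!
Perturb `u_A` on a measurable set `E` towards a constant `q` with `g(q) < ∞`, i.e. take
`u_A + t·1_E·(q − u_A)` with `0 < t < 1`. Convexity bounds the `g`-part of `J` by the convex
combination `(1 − t)·g(u_A) + t·g(q)` on `E`, and the quadratic part expands with first-order term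
`t·∫_E χ_A p_A (q − u_A)` (this is where `p_A = S*(S(χ_A u_A) − y_d)` enters). Minimality and
`t → 0` give `∫_E (g(q) − g(u_A) + χ_A p_A (q − u_A)) ≥ 0` for every `E`, hence the subgradient
inequality at `q` almost everywhere. Countably many rational `q` share one null set, and convexity
extends the inequality to all real `v`, via a rational point strictly between `u_A(x)` and `v`.
-/

namespace L0Control

lemma nonneg_of_forall_mul_add_sq_mul_nonneg {a K : ℝ}
    (h : ∀ t ∈ Ioo (0 : ℝ) 1, 0 ≤ t * a + t ^ 2 * K) : 0 ≤ a := by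
  have hlim : Tendsto (fun t => a + t * K) (𝓝[>] 0) (𝓝 a) := by
    have hcont : Continuous fun t : ℝ => a + t * K := by fun_prop
    simpa using (hcont.tendsto 0).mono_left nhdsWithin_le_nhds
  refine ge_of_tendsto hlim ?_
  filter_upwards [Ioo_mem_nhdsGT one_pos] with t ht
  have h' : t * 0 ≤ t * (a + t * K) := by linarith [h t ht]
  exact le_of_mul_le_mul_left h' ht.1

section Convex

variable {g : ℝ → ℝ≥0∞}

lemma apply_add_mul_sub_le_ofReal
    (hg_conv : ∀ u v l : ℝ, l ∈ Set.Ioo (0 : ℝ) 1 →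
      g (l * u + (1 - l) * v) ≤ ENNReal.ofReal l * g u + ENNReal.ofReal (1 - l) * g v)
    {a b t : ℝ} (ha : g a ≠ ⊤) (hb : g b ≠ ⊤) (ht : t ∈ Ioo (0 : ℝ) 1) :
    g (a + t * (b - a)) ≤ ENNReal.ofReal ((g a).toReal + t * ((g b).toReal - (g a).toReal)) := by
  obtain ⟨ht0, ht1⟩ := ht
  have h := hg_conv a b (1 - t) ⟨by linarith, by linarith⟩
  rw [show (1 : ℝ) - (1 - t) = t by ring, show (1 - t) * a + t * b = a + t * (b - a) by ring,
    ← ENNReal.ofReal_toReal ha, ← ENNReal.ofReal_toReal hb, ← ENNReal.ofReal_mul (by linarith),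
    ← ENNReal.ofReal_mul ht0.le, ← ENNReal.ofReal_add (by positivity) (by positivity)] at h
  exact h.trans_eq (congrArg ENNReal.ofReal (by ring))

lemma subgradient_ineq_of_forall_rat
    (hg_conv : ∀ u v l : ℝ, l ∈ Set.Ioo (0 : ℝ) 1 →
      g (l * u + (1 - l) * v) ≤ ENNReal.ofReal l * g u + ENNReal.ofReal (1 - l) * g v)
    {a s : ℝ} (ha : g a ≠ ⊤)
    (hrat : ∀ q : ℚ, g q ≠ ⊤ → (g a).toReal + s * (q - a) ≤ (g q).toReal)
    {v : ℝ} (hv : g v ≠ ⊤) : (g a).toReal + s * (v - a) ≤ (g v).toReal := by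
  rcases eq_or_ne v a with rfl | hne
  · simp
  obtain ⟨q, ht0, ht1⟩ : ∃ q : ℚ, 0 < ((q : ℝ) - a) / (v - a) ∧ ((q : ℝ) - a) / (v - a) < 1 := by
    rcases hne.lt_or_gt with h | h
    · obtain ⟨q, hq1, hq2⟩ := exists_rat_btwn h
      exact ⟨q, div_pos_of_neg_of_neg (by linarith) (by linarith),
        (div_lt_one_of_neg (by linarith)).2 (by linarith)⟩
    · obtain ⟨q, hq1, hq2⟩ := exists_rat_btwn h
      exact ⟨q, div_pos (by linarith) (by linarith), (div_lt_one (by linarith)).2 (by linarith)⟩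
  set t := ((q : ℝ) - a) / (v - a)
  have hqt : (q : ℝ) - a = t * (v - a) := (div_mul_cancel₀ _ (sub_ne_zero.2 hne)).symm
  have hconv := apply_add_mul_sub_le_ofReal hg_conv ha hv ⟨ht0, ht1⟩
  rw [show a + t * (v - a) = q by linarith] at hconv
  have hq := hrat q (ne_top_of_le_ne_top ENNReal.ofReal_ne_top hconv)
  have hq_le := ENNReal.toReal_le_of_le_ofReal
    (by nlinarith [ENNReal.toReal_nonneg (a := g a), ENNReal.toReal_nonneg (a := g v)]) hconv
  rw [hqt] at hq
  have h' : t * (s * (v - a)) ≤ t * ((g v).toReal - (g a).toReal) := by linarith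
  linarith [le_of_mul_le_mul_left h' ht0]

lemma subgradient_ineq_ereal_of_toReal {a c : ℝ} (ha : g a ≠ ⊤)
    (h : ∀ v, g v ≠ ⊤ → (g a).toReal + -c * (v - a) ≤ (g v).toReal) :
    (∀ v : ℝ, (g a : EReal) + ((-c * (v - a) : ℝ) : EReal) ≤ (g v : EReal)) ∧
      ∀ v : ℝ, ((c * a : ℝ) : EReal) + (g a : EReal) ≤ ((c * v : ℝ) : EReal) + (g v : EReal) := by
  rw [← EReal.coe_ennreal_toReal ha]
  refine ⟨fun v => ?_, fun v => ?_⟩ <;> rcases eq_or_ne (g v) ⊤ with hv | hv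
  · simp [hv]
  · rw [← EReal.coe_ennreal_toReal hv, ← EReal.coe_add, EReal.coe_le_coe_iff]
    exact h v hv
  · rw [hv, EReal.coe_ennreal_top, EReal.coe_add_top]
    exact le_top
  · rw [← EReal.coe_ennreal_toReal hv, ← EReal.coe_add, ← EReal.coe_add, EReal.coe_le_coe_iff]
    linarith [h v hv]

end Convex

section Lp

variable {α : Type*} [MeasurableSpace α] {μ : Measure α}
  {Y : Type*} [NormedAddCommGroup Y] [InnerProductSpace ℝ Y]

lemma coeFn_chiMul {A : Set α} (hA : MeasurableSet A) (u : Lp ℝ 2 μ) :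
    chiMul A u =ᵐ[μ] A.indicator u := by
  rw [chiMul, dif_pos hA]
  exact MemLp.coeFn_toLp _

lemma chiMul_add_smul {A : Set α} (hA : MeasurableSet A) (u v : Lp ℝ 2 μ) (t : ℝ) :
    chiMul A (u + t • v) = chiMul A u + t • chiMul A v := by
  refine Lp.ext ?_
  filter_upwards [coeFn_chiMul hA (u + t • v), coeFn_chiMul hA u, coeFn_chiMul hA v,
    Lp.coeFn_add u (t • v), Lp.coeFn_smul t v, Lp.coeFn_add (chiMul A u) (t • chiMul A v),
    Lp.coeFn_smul t (chiMul A v)] with x h h₁ h₂ h₃ h₄ h₅ h₆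
  rw [h, h₅, Pi.add_apply, h₆, Pi.smul_apply, h₁, h₂, indicator_apply, indicator_apply,
    indicator_apply, h₃, Pi.add_apply, h₄, Pi.smul_apply]
  split_ifs <;> simp

lemma inner_chiMul {A : Set α} (hA : MeasurableSet A) (p v : Lp ℝ 2 μ) :
    inner ℝ p (chiMul A v) = ∫ x, chi A x * p x * v x ∂μ := by
  rw [L2.inner_def]
  refine integral_congr_ae ?_
  filter_upwards [coeFn_chiMul hA v] with x hx
  by_cases hxA : x ∈ A <;> simp [hx, chi, hxA, mul_comm]

lemma integrable_chi_mul_mul {A : Set α} (hA : MeasurableSet A) {f h : α → ℝ}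
    (hf : MemLp f 2 μ) (hh : MemLp h 2 μ) : Integrable (fun x => chi A x * f x * h x) μ := by
  refine ((hf.integrable_mul hh).indicator hA).congr (ae_of_all _ fun x => ?_)
  by_cases hx : x ∈ A <;> simp [chi, hx]

lemma norm_sq_state_add_smul [CompleteSpace Y] (S : Lp ℝ 2 μ →L[ℝ] Y) (yd : Y) {A : Set α}
    (hA : MeasurableSet A) {u p : Lp ℝ 2 μ}
    (hp : p = ContinuousLinearMap.adjoint S (S (chiMul A u) - yd)) (e : Lp ℝ 2 μ) (t : ℝ) :
    ‖S (chiMul A (u + t • e)) - yd‖ ^ 2 = ‖S (chiMul A u) - yd‖ ^ 2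
      + 2 * t * ∫ x, chi A x * p x * e x ∂μ + t ^ 2 * ‖S (chiMul A e)‖ ^ 2 := by
  have hinner : inner ℝ (S (chiMul A u) - yd) (S (chiMul A e)) = ∫ x, chi A x * p x * e x ∂μ := by
    rw [← inner_chiMul hA, hp, ContinuousLinearMap.adjoint_inner_left]
  rw [chiMul_add_smul hA, map_add, map_smul, add_sub_right_comm, norm_add_sq_real,
    real_inner_smul_right, norm_smul, hinner, mul_pow, Real.norm_eq_abs, sq_abs]
  ring

lemma toReal_lintegral_perturb_le [IsFiniteMeasure μ] {g : ℝ → ℝ≥0∞}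
    (hg_conv : ∀ u v l : ℝ, l ∈ Set.Ioo (0 : ℝ) 1 →
      g (l * u + (1 - l) * v) ≤ ENNReal.ofReal l * g u + ENNReal.ofReal (1 - l) * g v)
    {u w : α → ℝ} {E : Set α} {q t : ℝ} (hgu : AEMeasurable (fun x => g (u x)) μ)
    (hu : ∫⁻ x, g (u x) ∂μ ≠ ⊤) (hq : g q ≠ ⊤) (hE : MeasurableSet E) (ht : t ∈ Ioo (0 : ℝ) 1)
    (hw : w =ᵐ[μ] fun x => u x + t * E.indicator (fun x => q - u x) x) :
    ∫⁻ x, g (w x) ∂μ ≠ ⊤ ∧ (∫⁻ x, g (w x) ∂μ).toReal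
      ≤ (∫⁻ x, g (u x) ∂μ).toReal + t * ∫ x in E, ((g q).toReal - (g (u x)).toReal) ∂μ := by
  set G := fun x => (g (u x)).toReal
  set F := fun x => G x + t * E.indicator (fun x => (g q).toReal - G x) x
  have hG : Integrable G μ := integrable_toReal_of_lintegral_ne_top hgu hu
  have hI : Integrable (fun x => t * E.indicator (fun x => (g q).toReal - G x) x) μ :=
    (((integrable_const _).sub hG).indicator hE).const_mul t
  have hF : Integrable F μ := hG.add hI
  have hF_nonneg : 0 ≤ F := fun x => by
    have : 0 ≤ G x := ENNReal.toReal_nonneg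
    by_cases hx : x ∈ E <;> simp only [F, hx, indicator_of_mem, indicator_of_notMem,
      not_false_eq_true, Pi.zero_apply] <;> nlinarith [ht.1, ht.2, ENNReal.toReal_nonneg (a := g q)]
  have hpointwise : ∀ᵐ x ∂μ, g (w x) ≤ ENNReal.ofReal (F x) := by
    filter_upwards [hw, ae_lt_top' hgu hu] with x hwx hux
    rw [hwx]
    by_cases hx : x ∈ E
    · simpa [F, G, hx] using apply_add_mul_sub_le_ofReal hg_conv hux.ne hq ht
    · simp [F, G, hx, ENNReal.ofReal_toReal hux.ne]
  have hle : ∫⁻ x, g (w x) ∂μ ≤ ENNReal.ofReal (∫ x, F x ∂μ) := by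
    rw [ofReal_integral_eq_lintegral_ofReal hF (ae_of_all _ hF_nonneg)]
    exact lintegral_mono_ae hpointwise
  have hF_eq : ∫ x, F x ∂μ
      = (∫⁻ x, g (u x) ∂μ).toReal + t * ∫ x in E, ((g q).toReal - (g (u x)).toReal) ∂μ := by
    rw [integral_add hG hI, integral_const_mul, integral_indicator hE, integral_toReal hgu (ae_lt_top' hgu hu)]
  refine ⟨ne_top_of_le_ne_top ENNReal.ofReal_ne_top hle, ?_⟩
  rw [← hF_eq]
  exact ENNReal.toReal_le_of_le_ofReal (integral_nonneg hF_nonneg) hle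

section Objective

variable {S : Lp ℝ 2 μ →L[ℝ] Y} {yd : Y} {g : ℝ → ℝ≥0∞} {β : α → ℝ} {A : Set α}

lemma lintegral_ne_top_of_Jfun_le {u v : Lp ℝ 2 μ} (h : Jfun S yd g β u A ≤ Jfun S yd g β v A)
    (hv : ∫⁻ x, g (v x) ∂μ ≠ ⊤) : ∫⁻ x, g (u x) ∂μ ≠ ⊤ := by
  intro hu
  rw [Jfun, Jfun, hu, ← EReal.coe_ennreal_toReal hv, EReal.coe_ennreal_top, EReal.coe_add_top,
    top_le_iff, ← EReal.coe_add] at h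
  exact EReal.coe_ne_top _ h

lemma add_toReal_le_of_Jfun_le {u v : Lp ℝ 2 μ} (h : Jfun S yd g β u A ≤ Jfun S yd g β v A)
    (hu : ∫⁻ x, g (u x) ∂μ ≠ ⊤) (hv : ∫⁻ x, g (v x) ∂μ ≠ ⊤) :
    2⁻¹ * ‖S (chiMul A u) - yd‖ ^ 2 + (∫⁻ x, g (u x) ∂μ).toReal
      ≤ 2⁻¹ * ‖S (chiMul A v) - yd‖ ^ 2 + (∫⁻ x, g (v x) ∂μ).toReal := by
  rw [Jfun, Jfun, ← EReal.coe_ennreal_toReal hu, ← EReal.coe_ennreal_toReal hv, ← EReal.coe_add,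
    ← EReal.coe_add, EReal.coe_le_coe_iff] at h
  linarith

lemma IsMinimizer.lintegral_ne_top [IsFiniteMeasure μ] {u : Lp ℝ 2 μ}
    (hu : IsMinimizer S yd g β A u) (hg : ∃ q, g q ≠ ⊤) : ∫⁻ x, g (u x) ∂μ ≠ ⊤ := by
  obtain ⟨q, hq⟩ := hg
  refine lintegral_ne_top_of_Jfun_le (hu (Lp.const 2 μ q)) ?_
  rw [lintegral_congr_ae ((Lp.coeFn_const 2 μ q).mono fun x hx => congrArg g hx)]
  simpa using ENNReal.mul_ne_top hq (measure_ne_top μ univ)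

variable [IsFiniteMeasure μ] [CompleteSpace Y] {u p : Lp ℝ 2 μ}

lemma IsMinimizer.setIntegral_variation_nonneg (hu : IsMinimizer S yd g β A u)
    (hgm : Measurable g)
    (hg_conv : ∀ u v l : ℝ, l ∈ Set.Ioo (0 : ℝ) 1 →
      g (l * u + (1 - l) * v) ≤ ENNReal.ofReal l * g u + ENNReal.ofReal (1 - l) * g v)
    (hA : MeasurableSet A) (hp : p = ContinuousLinearMap.adjoint S (S (chiMul A u) - yd))
    (hu_fin : ∫⁻ x, g (u x) ∂μ ≠ ⊤) {q : ℝ} (hq : g q ≠ ⊤) {E : Set α} (hE : MeasurableSet E) :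
    0 ≤ ∫ x in E, ((g q).toReal - (g (u x)).toReal + chi A x * p x * (q - u x)) ∂μ := by
  have hgu : AEMeasurable (fun x => g (u x)) μ :=
    hgm.comp_aemeasurable (Lp.aestronglyMeasurable u).aemeasurable
  have hq_sub_u : MemLp (fun x => q - u x) 2 μ := (memLp_const q).sub (Lp.memLp u)
  set e : Lp ℝ 2 μ := ((hq_sub_u.indicator hE).toLp _)
  have he : e =ᵐ[μ] E.indicator (fun x => q - u x) := MemLp.coeFn_toLp _
  have hlinear : ∫ x, chi A x * p x * e x ∂μ = ∫ x in E, chi A x * p x * (q - u x) ∂μ := by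
    rw [← integral_indicator hE]
    refine integral_congr_ae ?_
    filter_upwards [he] with x hx
    by_cases hxE : x ∈ E <;> simp [hx, hxE]
  have hgap : Integrable (fun x => (g q).toReal - (g (u x)).toReal) μ :=
    (integrable_const _).sub (integrable_toReal_of_lintegral_ne_top hgu hu_fin)
  rw [integral_add hgap.integrableOn (integrable_chi_mul_mul hA (Lp.memLp p) hq_sub_u).integrableOn]
  refine nonneg_of_forall_mul_add_sq_mul_nonneg (K := 2⁻¹ * ‖S (chiMul A e)‖ ^ 2) fun t ht => ?_
  have hw : ⇑(u + t • e) =ᵐ[μ] fun x => u x + t * E.indicator (fun x => q - u x) x := by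
    filter_upwards [Lp.coeFn_add u (t • e), Lp.coeFn_smul t e, he] with x h₁ h₂ h₃
    rw [h₁, Pi.add_apply, h₂, Pi.smul_apply, h₃, smul_eq_mul]
  obtain ⟨hw_fin, hw_le⟩ := toReal_lintegral_perturb_le hg_conv hgu hu_fin hq hE ht hw
  have hmin := add_toReal_le_of_Jfun_le (hu (u + t • e)) hu_fin hw_fin
  rw [norm_sq_state_add_smul S yd hA hp, hlinear] at hmin
  linarith

lemma IsMinimizer.ae_subgradient_ineq (hu : IsMinimizer S yd g β A u) (hgm : Measurable g)
    (hg_conv : ∀ u v l : ℝ, l ∈ Set.Ioo (0 : ℝ) 1 →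
      g (l * u + (1 - l) * v) ≤ ENNReal.ofReal l * g u + ENNReal.ofReal (1 - l) * g v)
    (hA : MeasurableSet A) (hp : p = ContinuousLinearMap.adjoint S (S (chiMul A u) - yd))
    (hu_fin : ∫⁻ x, g (u x) ∂μ ≠ ⊤) {q : ℝ} (hq : g q ≠ ⊤) :
    ∀ᵐ x ∂μ, (g (u x)).toReal + -(chi A x * p x) * (q - u x) ≤ (g q).toReal := by
  have hgu : AEMeasurable (fun x => g (u x)) μ :=
    hgm.comp_aemeasurable (Lp.aestronglyMeasurable u).aemeasurable
  have hint : Integrable (fun x => (g q).toReal - (g (u x)).toReal + chi A x * p x * (q - u x)) μ :=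
    ((integrable_const _).sub (integrable_toReal_of_lintegral_ne_top hgu hu_fin)).add
      (integrable_chi_mul_mul hA (Lp.memLp p) ((memLp_const q).sub (Lp.memLp u)))
  filter_upwards [ae_nonneg_of_forall_setIntegral_nonneg hint fun E hE _ =>
    hu.setIntegral_variation_nonneg hgm hg_conv hA hp hu_fin hq hE] with x hx
  simp only [Pi.zero_apply] at hx
  linarith

end Objective

end Lp

end L0Control

theorem optimality_condition_pointwise_general
    {d : ℕ} {Ω : Set (EuclideanSpace ℝ (Fin d))}
    (hΩfin : volume Ω < ⊤)
    {Y : Type*} [NormedAddCommGroup Y] [InnerProductSpace ℝ Y] [CompleteSpace Y]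
    (S : Lp ℝ 2 (volume.restrict Ω) →L[ℝ] Y) (yd : Y)
    (g : ℝ → ℝ≥0∞)
    (hg_proper : ∃ u : ℝ, g u ≠ ⊤)
    (hg_lsc : LowerSemicontinuous g)
    (β : EuclideanSpace ℝ (Fin d) → ℝ)
    (hg_conv : ∀ u v l : ℝ, l ∈ Set.Ioo (0 : ℝ) 1 →
      g (l * u + (1 - l) * v) ≤ ENNReal.ofReal l * g u + ENNReal.ofReal (1 - l) * g v)
    (A : Set (EuclideanSpace ℝ (Fin d))) (hAm : MeasurableSet A)
    (uA pA : Lp ℝ 2 (volume.restrict Ω))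
    (huA : IsMinimizer S yd g β A uA)
    (hpA : pA = ContinuousLinearMap.adjoint S (S (chiMul A uA) - yd)) :
    ∀ᵐ x ∂(volume.restrict Ω),
      (∀ v : ℝ, (g (uA x) : EReal) + (((-(chi A x * pA x)) * (v - uA x) : ℝ) : EReal)
          ≤ (g v : EReal)) ∧
        ∀ v : ℝ, ((chi A x * pA x * uA x : ℝ) : EReal) + (g (uA x) : EReal)
          ≤ ((chi A x * pA x * v : ℝ) : EReal) + (g v : EReal) := by
  have : IsFiniteMeasure (volume.restrict Ω) := ⟨by rwa [Measure.restrict_apply_univ]⟩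
  have hgm : Measurable g := hg_lsc.measurable
  have hu_fin := huA.lintegral_ne_top hg_proper
  have hrat : ∀ᵐ x ∂(volume.restrict Ω), ∀ q : ℚ, g q ≠ ⊤ →
      (g (uA x)).toReal + -(chi A x * pA x) * (q - uA x) ≤ (g q).toReal := by
    refine ae_all_iff.2 fun q => ?_
    rcases eq_or_ne (g q) ⊤ with hq | hq
    · exact .of_forall fun _ hq' => (hq' hq).elim
    · exact (huA.ae_subgradient_ineq hgm hg_conv hAm hpA hu_fin hq).mono fun _ hx _ => hx
  filter_upwards [ae_lt_top' (hgm.comp_aemeasurable (Lp.aestronglyMeasurable uA).aemeasurable)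
    hu_fin, hrat] with x hx_fin hx_rat
  exact subgradient_ineq_ereal_of_toReal hx_fin.ne fun v hv =>
    subgradient_ineq_of_forall_rat hg_conv hx_fin.ne hx_rat hv

/-- If `u_A` minimizes `J(·, A)` and `p_A = S*(S(χ_A u_A) − y_d)`, then
`−χ_A(x)·p_A(x) ∈ ∂g(u_A(x))` for a.e. `x ∈ Ω`; equivalently, `u_A(x)` minimizes
`u ↦ χ_A(x)·p_A(x)·u + g(u)` for a.e. `x ∈ Ω`. -/
theorem optimality_condition_pointwise
    {d : ℕ} {Ω : Set (EuclideanSpace ℝ (Fin d))}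
    (hΩm : MeasurableSet Ω) (hΩfin : volume Ω < ⊤)
    {Y : Type*} [NormedAddCommGroup Y] [InnerProductSpace ℝ Y] [CompleteSpace Y]
    (S : Lp ℝ 2 (volume.restrict Ω) →L[ℝ] Y) (yd : Y)
    (g : ℝ → ℝ≥0∞)
    (hg_proper : ∃ u : ℝ, g u ≠ ⊤)
    (hg_lsc : LowerSemicontinuous g)
    (hg_zero : ∀ u : ℝ, g u = 0 ↔ u = 0)
    (β : EuclideanSpace ℝ (Fin d) → ℝ)
    (hβ : Integrable β (volume.restrict Ω))
    (hg_conv : ∀ u v l : ℝ, l ∈ Set.Ioo (0 : ℝ) 1 →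
      g (l * u + (1 - l) * v) ≤ ENNReal.ofReal l * g u + ENNReal.ofReal (1 - l) * g v)
    (A : Set (EuclideanSpace ℝ (Fin d))) (hAm : MeasurableSet A) (hAΩ : A ⊆ Ω)
    (uA pA : Lp ℝ 2 (volume.restrict Ω))
    (huA : IsMinimizer S yd g β A uA)
    (hpA : pA = ContinuousLinearMap.adjoint S (S (chiMul A uA) - yd)) :
    ∀ᵐ x ∂(volume.restrict Ω),
      (∀ v : ℝ, (g (uA x) : EReal) + (((-(chi A x * pA x)) * (v - uA x) : ℝ) : EReal)
          ≤ (g v : EReal)) ∧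
        ∀ v : ℝ, ((chi A x * pA x * uA x : ℝ) : EReal) + (g (uA x) : EReal)
          ≤ ((chi A x * pA x * v : ℝ) : EReal) + (g v : EReal) :=
  optimality_condition_pointwise_general hΩfin S yd g hg_proper hg_lsc β hg_conv A hAm uA pA huA hpA
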